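/- arXiv:2401.11397 — 8 statements merged into one kernel-verified Lean document; each statement's English description precedes it below -/
import Mathlib

section
/- Every nonabelian CSA group G is a domain: for every nontrivial normal subgroup K of G, the centralizer C_G(K) is trivial. -/
def Malnormal {G : Type*} [Group G] (H : Subgroup G) : Prop :=
  ∀ x : G, x ∉ H → ∀ h ∈ H, x⁻¹ * h * x ∈ H → h = 1

/-!
Suppose `c ≠ 1` centralizes `K` and let `M` be a maximal abelian subgroup containing `c`.
Malnormality of `M` forces everything commuting with `c` into `M`, so `K ≤ M`. For `1 ≠ k ∈ K`
every conjugate of `k` again lies in `K ≤ M`, so malnormality forces `M = G`, and `G` is abelian.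
-/

namespace Subgroup

variable {G : Type*} [Group G]

theorem exists_le_maximal_isMulCommutative (H : Subgroup G) [IsMulCommutative H] :
    ∃ M : Subgroup G, H ≤ M ∧ Maximal (fun S : Subgroup G => IsMulCommutative S) M := by
  refine zorn_le_nonempty₀ _ (fun c hc hchain S hS => ?_) H ‹_›
  have : Nonempty c := ⟨⟨S, hS⟩⟩
  have : ∀ T : c, IsMulCommutative (T : Subgroup G) := fun T => hc T.2
  refine ⟨sSup c, ?_, fun T hT => le_sSup hT⟩
  rw [sSup_eq_iSup']
  exact isMulCommutative_iSup hchain.directedOn.directed_val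

end Subgroup

namespace Malnormal

variable {G : Type*} [Group G] {M : Subgroup G}

theorem mem_of_commute (hM : Malnormal M) {c : G} (hcM : c ∈ M) (hc : c ≠ 1) {k : G}
    (hck : Commute k c) : k ∈ M := by
  by_contra hkM
  refine hc (hM k hkM c hcM ?_)
  rwa [mul_assoc, ← hck.eq, inv_mul_cancel_left]

theorem eq_top_of_normal_le (hM : Malnormal M) {K : Subgroup G} (hKn : K.Normal)
    (hK : K ≠ ⊥) (hKM : K ≤ M) : M = ⊤ := by
  obtain ⟨k, hk, hk1⟩ := K.bot_or_exists_ne_one.resolve_left hK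
  refine eq_top_iff.mpr fun x _ => ?_
  by_contra hx
  exact hk1 (hM x hx k (hKM hk) (hKM (hKn.conj_mem' k hk x)))

end Malnormal

theorem stmt3 {G : Type*} [Group G]
    (hCSA : ∀ M : Subgroup G, Maximal (fun H : Subgroup G => IsMulCommutative H) M → Malnormal M)
    (hna : ¬ ∀ a b : G, a * b = b * a) :
    ∀ K : Subgroup G, K.Normal → K ≠ ⊥ → Subgroup.centralizer (K : Set G) = ⊥ := by
  intro K hKn hK
  refine (Subgroup.eq_bot_iff_forall _).mpr fun c hc => ?_
  by_contra hc1
  obtain ⟨M, hcM, hmax⟩ := (Subgroup.zpowers c).exists_le_maximal_isMulCommutative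
  have hMal := hCSA M hmax
  have hKM : K ≤ M := fun k hk =>
    hMal.mem_of_commute (hcM (Subgroup.mem_zpowers c)) hc1 (hc k hk)
  have hMtop := hMal.eq_top_of_normal_le hKn hK hKM
  have : IsMulCommutative M := hmax.prop
  exact hna fun a b => setLike_mul_comm (s := M) (hMtop ▸ Subgroup.mem_top a)
    (hMtop ▸ Subgroup.mem_top b)
end

section
/- In a CSA group G, if K is a nontrivial normal subgroup with nontrivial centralizer, then K is abelian. -/
namespace Subgroup

variable {G : Type*} [Group G]

theorem isMulCommutative_sSup_of_isChain {s : Set (Subgroup G)} (hs : ∀ H ∈ s, IsMulCommutative H)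
    (hchain : IsChain (· ≤ ·) s) (hne : s.Nonempty) : IsMulCommutative (sSup s : Subgroup G) := by
  refine ⟨⟨fun ⟨a, ha⟩ ⟨b, hb⟩ => Subtype.ext ?_⟩⟩
  have hdir : DirectedOn (· ≤ ·) s := hchain.directedOn
  obtain ⟨A, hA, haA⟩ := (mem_sSup_of_directedOn hne hdir).1 ha
  obtain ⟨B, hB, hbB⟩ := (mem_sSup_of_directedOn hne hdir).1 hb
  obtain ⟨C, hC, hAC, hBC⟩ := hdir A hA B hB
  have := hs C hC
  exact setLike_mul_comm (hAC haA) (hBC hbB)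

theorem exists_maximal_isMulCommutative_mem (c : G) :
    ∃ M : Subgroup G, c ∈ M ∧ Maximal (fun H : Subgroup G => IsMulCommutative H) M := by
  obtain ⟨M, hcM, hM⟩ := zorn_le_nonempty₀ {H : Subgroup G | IsMulCommutative H}
    (fun s hs hchain H hH =>
      ⟨sSup s, isMulCommutative_sSup_of_isChain hs hchain ⟨H, hH⟩, fun _ => le_sSup⟩)
    (zpowers c) (zpowers_isMulCommutative c)
  exact ⟨M, hcM (mem_zpowers c), hM⟩

end Subgroup

theorem Malnormal.mem_of_commute_s5 {G : Type*} [Group G] {M : Subgroup G} (hM : Malnormal M)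
    {c x : G} (hcM : c ∈ M) (hc1 : c ≠ 1) (hxc : Commute x c) : x ∈ M := by
  by_contra hxM
  refine hc1 (hM x hxM c hcM ?_)
  rwa [mul_assoc, ← hxc.eq, inv_mul_cancel_left]

theorem stmt5_general {G : Type*} [Group G]
    (hCSA : ∀ M : Subgroup G, Maximal (fun H : Subgroup G => IsMulCommutative H) M → Malnormal M)
    (K : Subgroup G)
    (hC : Subgroup.centralizer (K : Set G) ≠ ⊥) :
    ∀ a ∈ K, ∀ b ∈ K, a * b = b * a := by
  obtain ⟨⟨c, hcK⟩, hc1⟩ := Subgroup.ne_bot_iff_exists_ne_one.1 hC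
  obtain ⟨M, hcM, hM⟩ := Subgroup.exists_maximal_isMulCommutative_mem c
  have hKM : K ≤ M := fun a ha =>
    (hCSA M hM).mem_of_commute_s5 hcM (fun h => hc1 (Subtype.ext h))
      (Subgroup.mem_centralizer_iff.1 hcK a ha)
  have := hM.prop
  exact fun a ha b hb => setLike_mul_comm (hKM ha) (hKM hb)

theorem stmt5 {G : Type*} [Group G]
    (hCSA : ∀ M : Subgroup G, Maximal (fun H : Subgroup G => IsMulCommutative H) M → Malnormal M)
    (K : Subgroup G) (hK : K.Normal) (hKbot : K ≠ ⊥)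
    (hC : Subgroup.centralizer (K : Set G) ≠ ⊥) :
    ∀ a ∈ K, ∀ b ∈ K, a * b = b * a :=
  stmt5_general hCSA K hC
end

section
/- Let G be a group in which every maximal locally nilpotent subgroup is malnormal. If N is a nontrivial normal subgroup of G with a nonidentity element a centralizing N, then N is locally nilpotent (indeed ⟨a⟩N is locally nilpotent). -/
def LocNilp {G : Type*} [Group G] (H : Subgroup G) : Prop :=
  ∀ K : Subgroup G, K ≤ H → K.FG → Group.IsNilpotent K

lemma locNilp_mono {G : Type*} [Group G] {H H' : Subgroup G} (h : LocNilp H) (hle : H' ≤ H) :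
    LocNilp H' := fun K hK hfg => h K (hK.trans hle) hfg

lemma finset_bound {G : Type*} [Group G] (c : Set (Subgroup G)) (hc : DirectedOn (· ≤ ·) c)
    (t : Finset G) (h : ∀ x ∈ t, ∃ H ∈ c, x ∈ H) (hne : c.Nonempty) :
    ∃ H ∈ c, ∀ x ∈ t, x ∈ H := by
  classical
  induction t using Finset.induction with
  | empty => obtain ⟨H, hH⟩ := hne; exact ⟨H, hH, by simp⟩
  | @insert y s hys ih =>
    obtain ⟨H, hHc, hHs⟩ := ih (fun x hx => h x (Finset.mem_insert_of_mem hx))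
    obtain ⟨H', hH'c, hyH'⟩ := h y (Finset.mem_insert_self y s)
    obtain ⟨H'', hH''c, h1, h2⟩ := hc H hHc H' hH'c
    refine ⟨H'', hH''c, fun x hx => ?_⟩
    rcases Finset.mem_insert.1 hx with rfl | hx
    · exact h2 hyH'
    · exact h1 (hHs x hx)

theorem stmt7 {G : Type*} [Group G]
    (hmal : ∀ M : Subgroup G, Maximal LocNilp M → Malnormal M)
    (N : Subgroup G) (hN : N.Normal) (hNbot : N ≠ ⊥)
    (a : G) (ha1 : a ≠ 1) (ha : a ∈ Subgroup.centralizer (N : Set G)) :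
    LocNilp N ∧ LocNilp (Subgroup.zpowers a ⊔ N) := by
  -- zpowers a is locally nilpotent
  have hza : LocNilp (Subgroup.zpowers a) := by
    intro K hK _
    have hc : ∀ x y : K, x * y = y * x := by
      rintro ⟨x, hx⟩ ⟨y, hy⟩
      obtain ⟨m, rfl⟩ := hK hx
      obtain ⟨n, rfl⟩ := hK hy
      ext
      simp only [Subgroup.coe_mul]
      exact (Commute.refl a).zpow_zpow m n
    exact ⟨1, by
      rw [eq_top_iff]
      intro x _
      rw [upperCentralSeries_one]
      exact Subgroup.mem_center_iff.2 fun y => hc y x⟩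
  -- Zorn: maximal locally nilpotent subgroup containing zpowers a
  obtain ⟨M, haM, hMmax⟩ := zorn_le_nonempty₀ (setOf LocNilp)
    (fun c hcs hchain y hyc => by
      refine ⟨sSup c, ?_, fun z hz => le_sSup hz⟩
      intro K hK hfg
      obtain ⟨t, rfl⟩ := hfg
      have hdir : DirectedOn (· ≤ ·) c := hchain.directedOn
      obtain ⟨H, hHc, hHt⟩ := finset_bound c hdir t
        (fun x hx => (Subgroup.mem_sSup_of_directedOn ⟨y, hyc⟩ hdir).1
          (hK (Subgroup.subset_closure hx))) ⟨y, hyc⟩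
      exact hcs hHc (Subgroup.closure ↑t) ((Subgroup.closure_le H).2 hHt) ⟨t, rfl⟩)
    (Subgroup.zpowers a) hza
  have hMloc : LocNilp M := hMmax.1
  have haM' : a ∈ M := haM (Subgroup.mem_zpowers a)
  -- N ≤ M via malnormality
  have hNM : N ≤ M := by
    intro n hn
    by_contra hnM
    have hcomm : n * a = a * n := Subgroup.mem_centralizer_iff.1 ha n hn
    have : n⁻¹ * a * n = a := by
      rw [mul_assoc, ← hcomm, ← mul_assoc, inv_mul_cancel, one_mul]
    have := hmal M hMmax n hnM a haM' (by rw [this]; exact haM')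
    exact ha1 this
  have hsup : Subgroup.zpowers a ⊔ N ≤ M := sup_le haM hNM
  exact ⟨locNilp_mono hMloc hNM, locNilp_mono hMloc hsup⟩
end

section
/- A group G is a domain (contains no nontrivial zero divisors in the sense of algebraic geometry over groups) if and only if for every nontrivial normal subgroup K ≤ G, the centralizer C_G(K) is trivial. -/
/-! `x` is a zero divisor exactly when `x ≠ 1` and the centralizer of its normal closure is
nontrivial. Since every nontrivial normal subgroup contains the normal closure of one of its
nontrivial elements, and centralizers reverse inclusions, the theorem follows. -/

open scoped commutatorElement

/-- `x` is a zero divisor: `x ≠ 1` and there is `y ≠ 1` commuting with all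
conjugates of `x`. -/
def IsZeroDivisor {G : Type*} [Group G] (x : G) : Prop :=
  x ≠ 1 ∧ ∃ y : G, y ≠ 1 ∧ ∀ g : G, ⁅g⁻¹ * x * g, y⁆ = 1

open Subgroup

theorem Subgroup.mem_centralizer_normalClosure_singleton_iff {G : Type*} [Group G] {x y : G} :
    y ∈ centralizer (normalClosure {x} : Set G) ↔ ∀ g : G, Commute (g⁻¹ * x * g) y := by
  simp only [normalClosure, centralizer_closure, mem_centralizer_iff, Group.mem_conjugatesOfSet_iff,
    Set.mem_singleton_iff, exists_eq_left, isConj_iff, forall_exists_index, forall_apply_eq_imp_iff]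
  exact ⟨fun h g => by simpa [commute_iff_eq] using h g⁻¹, fun h g => by simpa using (h g⁻¹).eq⟩

theorem isZeroDivisor_iff {G : Type*} [Group G] {x : G} :
    IsZeroDivisor x ↔ x ≠ 1 ∧ centralizer (normalClosure {x} : Set G) ≠ ⊥ := by
  simp only [IsZeroDivisor, commutatorElement_eq_one_iff_commute, ne_eq, eq_bot_iff_forall,
    not_forall, exists_prop, mem_centralizer_normalClosure_singleton_iff]
  exact and_congr_right' (exists_congr fun _ => and_comm)

theorem stmt11 {G : Type*} [Group G] :
    (∀ x : G, ¬ IsZeroDivisor x) ↔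
    (∀ K : Subgroup G, K.Normal → K ≠ ⊥ → Subgroup.centralizer (K : Set G) = ⊥) := by
  simp only [isZeroDivisor_iff, not_and, not_not]
  constructor
  · intro h K hK hK_ne_bot
    obtain ⟨x, hxK, hx⟩ := K.bot_or_exists_ne_one.resolve_left hK_ne_bot
    have hle : normalClosure {x} ≤ K := normalClosure_le_normal (Set.singleton_subset_iff.mpr hxK)
    exact le_bot_iff.mp (h x hx ▸ centralizer_le hle)
  · exact fun h x hx => h _ inferInstance (by simpa [normalClosure_eq_bot_iff] using hx)
end

section
/- Every nonabelian free group F is a domain: every nontrivial normal subgroup of F has trivial centralizer. -/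
/-!
Abelian subgroups of a free group are free (Nielsen–Schreier) and commutative, hence cyclic; so
two commuting nontrivial elements have a common nontrivial power. If `K` is normal and nontrivial
with nontrivial centralizer, a common power of an element of `K` and one of its centralizer shows
that `K ⊓ centralizer K` is a nontrivial normal abelian subgroup, i.e. some `⟨z⟩` with `z ≠ 1`.
Every square then commutes with `z`, so `a²` and `b²` both have nontrivial powers in `⟨z⟩`, which
forces `a ^ m = b ^ n` with `m ≠ 0`: impossible for distinct generators.
-/

open Subgroup

theorem commute_pow_two_of_normal_zpowers {G : Type*} [Group G] [IsMulTorsionFree G] {z : G}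
    (hz : (zpowers z).Normal) (x : G) : Commute (x ^ 2) z := by
  have conj_eq (y : G) : ∃ d : ℤ, MulAut.conj y z = z ^ d := by
    obtain ⟨d, hd⟩ := mem_zpowers_iff.mp (hz.conj_mem z (mem_zpowers z) y)
    exact ⟨d, hd.symm⟩
  -- conjugation acts on the infinite cyclic group `⟨z⟩` by an automorphism, i.e. `z ↦ z ^ (±1)`
  obtain ⟨d, hd⟩ := conj_eq x
  obtain ⟨e, he⟩ := conj_eq x⁻¹
  have hsq : MulAut.conj (x ^ 2) z = z ^ (d * d) := by
    rw [map_pow, pow_two, MulAut.mul_apply, hd, map_zpow, hd, ← zpow_mul]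
  have hde : z ^ (e * d) = z := by
    rw [zpow_mul, ← he, ← map_zpow, ← hd, map_inv, MulAut.inv_apply, MulEquiv.symm_apply_apply]
  rw [commute_iff_eq, ← mul_inv_eq_iff_eq_mul, ← MulAut.conj_apply, hsq]
  rcases eq_or_ne z 1 with rfl | hz1
  · exact one_zpow _
  · have hed : e * d - 1 = 0 := (IsMulTorsionFree.zpow_eq_one_iff_right hz1).mp <| by
      rw [zpow_sub_one, hde, mul_inv_cancel]
    rw [Int.isUnit_mul_self (.of_mul_eq_one_right e (by omega)), zpow_one]

theorem Subgroup.isMulCommutative_inf_centralizer {G : Type*} [Group G] (K : Subgroup G) :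
    IsMulCommutative ↥(K ⊓ centralizer K) :=
  IsMulCommutative.of_setLike_mul_comm fun a ha _ hb => mem_centralizer_iff.mp hb.2 a ha.1

namespace FreeGroup

variable {α : Type*}

theorem eq_of_commute_of {x y : α} (h : Commute (of x) (of y)) : x = y := by
  classical
  by_contra hxy
  -- two noncommuting transpositions of `Fin 3` separate `of x` and `of y`
  have := congrArg (lift fun c => if c = x then Equiv.swap (0 : Fin 3) 1 else Equiv.swap 1 2) h.eq
  simp [Ne.symm hxy] at this
  exact absurd this (by decide)

theorem isCyclic_of_isMulCommutative [IsMulCommutative (FreeGroup α)] : IsCyclic (FreeGroup α) := by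
  have : Subsingleton α := ⟨fun x y => eq_of_commute_of (mul_comm' _ _)⟩
  cases isEmpty_or_nonempty α with
  | inl => infer_instance
  | inr h =>
    have : Unique α := uniqueOfSubsingleton h.some
    infer_instance

theorem eq_zero_of_zpow_of_eq_zpow_of {a b : α} (hab : a ≠ b) {m n : ℤ}
    (h : of a ^ m = of b ^ n) : m = 0 := by
  classical
  simpa [hab.symm] using congrArg (lift (Pi.mulSingle a (Multiplicative.ofAdd (1 : ℤ)))) h

end FreeGroup

namespace IsFreeGroup

variable {G : Type*} [Group G] [IsFreeGroup G]

theorem isCyclic_of_isMulCommutative [IsMulCommutative G] : IsCyclic G := by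
  let e := toFreeGroup G
  have := e.surjective.mul_comm (f := e.toMulHom) inferInstance
  exact e.isCyclic.mpr FreeGroup.isCyclic_of_isMulCommutative

theorem exists_zpow_eq_zpow_of_commute {u v : G} (h : Commute u v) (hu : u ≠ 1) (hv : v ≠ 1) :
    ∃ m n : ℤ, m ≠ 0 ∧ n ≠ 0 ∧ u ^ m = v ^ n := by
  have : IsMulCommutative (closure {u, v}) := isMulCommutative_closure <| by
    rintro x (rfl | rfl) y (rfl | rfl) <;> first | rfl | exact h.eq | exact h.symm.eq
  obtain ⟨z, hz⟩ := (closure {u, v}).isCyclic_iff_exists_zpowers_eq_top.mp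
    isCyclic_of_isMulCommutative
  obtain ⟨i, rfl⟩ := mem_zpowers_iff.mp (hz ▸ subset_closure (by simp) : u ∈ zpowers z)
  obtain ⟨j, rfl⟩ := mem_zpowers_iff.mp (hz ▸ subset_closure (by simp) : v ∈ zpowers z)
  refine ⟨j, i, ?_, ?_, by rw [← zpow_mul, ← zpow_mul, mul_comm]⟩
  · rintro rfl; exact hv (zpow_zero z)
  · rintro rfl; exact hu (zpow_zero z)

end IsFreeGroup

namespace FreeGroup

variable {α : Type*}

theorem eq_bot_of_normal_of_isMulCommutative {a b : α} (hab : a ≠ b) (N : Subgroup (FreeGroup α))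
    [N.Normal] [IsMulCommutative N] : N = ⊥ := by
  obtain ⟨z, rfl⟩ :=
    N.isCyclic_iff_exists_zpowers_eq_top.mp IsFreeGroup.isCyclic_of_isMulCommutative
  rcases eq_or_ne z 1 with rfl | hz
  · exact zpowers_one_eq_bot
  have sq_ne_one (c : α) : of c ^ 2 ≠ 1 := fun h => of_ne_one c (sq_eq_one.mp h)
  obtain ⟨p, q, hp, -, hpq⟩ := IsFreeGroup.exists_zpow_eq_zpow_of_commute
    (commute_pow_two_of_normal_zpowers inferInstance (of a)) (sq_ne_one a) hz
  obtain ⟨r, s, -, hs, hrs⟩ := IsFreeGroup.exists_zpow_eq_zpow_of_commute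
    (commute_pow_two_of_normal_zpowers inferInstance (of b)) (sq_ne_one b) hz
  have : of a ^ (2 * (p * s)) = of b ^ (2 * (r * q)) := by
    rw [zpow_mul, zpow_mul, zpow_ofNat, hpq, ← zpow_mul, mul_comm q, zpow_mul, ← hrs,
      ← zpow_mul, ← zpow_ofNat, ← zpow_mul]
  exact absurd (eq_zero_of_zpow_of_eq_zpow_of hab this) (by simp [hp, hs])

theorem inf_centralizer_ne_bot {K : Subgroup (FreeGroup α)} (hK : K ≠ ⊥)
    (hC : centralizer (K : Set (FreeGroup α)) ≠ ⊥) : K ⊓ centralizer K ≠ ⊥ := by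
  obtain ⟨k, hkK, hk⟩ := (bot_or_exists_ne_one K).resolve_left hK
  obtain ⟨g, hgC, hg⟩ := (bot_or_exists_ne_one _).resolve_left hC
  obtain ⟨m, n, hm, -, hmn⟩ :=
    IsFreeGroup.exists_zpow_eq_zpow_of_commute (mem_centralizer_iff.mp hgC k hkK).symm hg hk
  have hgm : g ^ m ≠ 1 := (IsMulTorsionFree.zpow_eq_one_iff_left hm).not.mpr hg
  exact fun h => hgm ((eq_bot_iff_forall _).mp h _ ⟨hmn ▸ zpow_mem hkK n, zpow_mem hgC m⟩)

end FreeGroup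

theorem stmt13 {α : Type*} (a b : α) (hab : a ≠ b) :
    ∀ K : Subgroup (FreeGroup α), K.Normal → K ≠ ⊥ →
      Subgroup.centralizer (K : Set (FreeGroup α)) = ⊥ := by
  intro K _ hK
  by_contra hC
  have := K.isMulCommutative_inf_centralizer
  exact FreeGroup.inf_centralizer_ne_bot hK hC
    (FreeGroup.eq_bot_of_normal_of_isMulCommutative hab _)
end

section
/- In a group G with the property that any two locally nilpotent subgroups with nontrivial intersection generate a locally nilpotent subgroup, if a ≠ 1 centralizes elements x₁,…,xₙ of a normal subgroup N, then the subgroup ⟨a, x₁,…,xₙ⟩ is nilpotent. -/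
/-- The closure of a set of pairwise commuting elements is commutative. -/
lemma closure_comm {G : Type*} [Group G] {s : Set G}
    (hs : ∀ u ∈ s, ∀ v ∈ s, Commute u v) :
    ∀ u ∈ Subgroup.closure s, ∀ v ∈ Subgroup.closure s, Commute u v := by
  intro u hu v hv
  induction hu using Subgroup.closure_induction with
  | mem w hw =>
    induction hv using Subgroup.closure_induction with
    | mem z hz => exact hs w hw z hz
    | one => exact Commute.one_right w
    | mul _ _ _ _ h1 h2 => exact h1.mul_right h2
    | inv _ _ h => exact h.inv_right
  | one => exact Commute.one_left v
  | mul _ _ _ _ h1 h2 => exact h1.mul_left h2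
  | inv _ _ h => exact h.inv_left

/-- A subgroup whose elements commute is locally nilpotent. -/
lemma locNilp_of_comm {G : Type*} [Group G] {H : Subgroup G}
    (h : ∀ u ∈ H, ∀ v ∈ H, Commute u v) : LocNilp H := by
  intro K hK _
  letI : CommGroup K :=
    { mul_comm := fun a b => Subtype.ext (h a (hK a.2) b (hK b.2)) }
  infer_instance

theorem stmt14 {G : Type*} [Group G]
    (hNT : ∀ K₁ K₂ : Subgroup G, LocNilp K₁ → LocNilp K₂ → K₁ ⊓ K₂ ≠ ⊥ →
      LocNilp (K₁ ⊔ K₂))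
    (N : Subgroup G) (hN : N.Normal)
    (a : G) (ha1 : a ≠ 1) (n : ℕ) (x : Fin n → G)
    (hxN : ∀ i, x i ∈ N) (hcomm : ∀ i, a * x i = x i * a) :
    Group.IsNilpotent (Subgroup.closure ({a} ∪ Set.range x)) := by
  -- each ⟨a, x i⟩ is abelian
  have habel : ∀ i, LocNilp (Subgroup.closure {a, x i}) := by
    intro i
    apply locNilp_of_comm
    apply closure_comm
    rintro u (rfl | rfl) v (rfl | rfl)
    · exact Commute.refl _
    · exact hcomm i
    · exact (hcomm i).symm
    · exact Commute.refl _
  -- by induction on finite sets of indices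
  have key : ∀ s : Finset (Fin n),
      LocNilp (Subgroup.closure ({a} ∪ x '' ↑s)) := by
    intro s
    induction s using Finset.induction with
    | empty =>
      simp only [Finset.coe_empty, Set.image_empty, Set.union_empty]
      apply locNilp_of_comm
      apply closure_comm
      rintro u rfl v rfl
      exact Commute.refl _
    | @insert i s hi ih =>
      have hset : ({a} ∪ x '' ↑(insert i s) : Set G) =
          ({a} ∪ x '' ↑s) ∪ {a, x i} := by
        simp only [Finset.coe_insert, Set.image_insert_eq]
        ext y
        simp only [Set.mem_union, Set.mem_insert_iff, Set.mem_singleton_iff]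
        tauto
      rw [hset, Subgroup.closure_union]
      apply hNT _ _ ih (habel i)
      intro hbot
      apply ha1
      have haK : a ∈ Subgroup.closure ({a} ∪ x '' ↑s) ⊓ Subgroup.closure {a, x i} := by
        constructor
        · exact Subgroup.subset_closure (Or.inl rfl)
        · exact Subgroup.subset_closure (Or.inl rfl)
      rw [hbot] at haK
      exact haK
  have := key Finset.univ
  have hrange : (x '' ↑(Finset.univ : Finset (Fin n))) = Set.range x := by
    simp
  rw [hrange] at this
  apply this _ le_rfl
  rw [Subgroup.fg_iff]
  exact ⟨{a} ∪ Set.range x, rfl,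
    ((Set.finite_singleton a).union (Set.finite_range x))⟩
end

section
/- Let G be a commutative transitive group (commuting is an equivalence relation on nontrivial elements). Then every nontrivial normal subgroup N of G with nontrivial centralizer C_G(N) is abelian. -/
open scoped commutatorElement

theorem commute_of_commute_of_ne_one {G : Type*} [Group G]
    (hCT : ∀ a b c : G, a ≠ 1 → b ≠ 1 → c ≠ 1 → ⁅a, b⁆ = 1 → ⁅b, c⁆ = 1 → ⁅a, c⁆ = 1)
    {a b c : G} (hc : c ≠ 1) (hac : Commute a c) (hcb : Commute c b) : Commute a b := by
  rcases eq_or_ne a 1 with rfl | ha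
  · exact Commute.one_left b
  rcases eq_or_ne b 1 with rfl | hb
  · exact Commute.one_right a
  simp only [← commutatorElement_eq_one_iff_commute] at hac hcb ⊢
  exact hCT a c b ha hc hb hac hcb

theorem stmt17_general {G : Type*} [Group G]
    (hCT : ∀ a b c : G, a ≠ 1 → b ≠ 1 → c ≠ 1 → ⁅a, b⁆ = 1 → ⁅b, c⁆ = 1 → ⁅a, c⁆ = 1)
    (N : Subgroup G)
    (hC : Subgroup.centralizer (N : Set G) ≠ ⊥) :
    ∀ a ∈ N, ∀ b ∈ N, a * b = b * a := by
  obtain ⟨c, hc, hc1⟩ := (Subgroup.bot_or_exists_ne_one _).resolve_left hC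
  intro a ha b hb
  exact commute_of_commute_of_ne_one hCT hc1 (hc a ha) (hc b hb).symm

theorem stmt17 {G : Type*} [Group G]
    (hCT : ∀ a b c : G, a ≠ 1 → b ≠ 1 → c ≠ 1 → ⁅a, b⁆ = 1 → ⁅b, c⁆ = 1 → ⁅a, c⁆ = 1)
    (N : Subgroup G) (hN : N.Normal) (hNbot : N ≠ ⊥)
    (hC : Subgroup.centralizer (N : Set G) ≠ ⊥) :
    ∀ a ∈ N, ∀ b ∈ N, a * b = b * a :=
  stmt17_general hCT N hC
end

section
/- Let G be a CSN(k) group in which every class-≤k nilpotent subgroup is contained in a maximal one (e.g., by Zorn's lemma when chains of class-≤k nilpotent subgroups have class-≤k nilpotent unions). If G contains a nontrivial normal subgroup N that is nilpotent of class at most k, then G itself is nilpotent of class at most k. -/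
def NilpClassLe {G : Type*} [Group G] (k : ℕ) (H : Subgroup G) : Prop :=
  (⊤ : Subgroup H).lowerCentralSeries k = ⊥

/-- A nontrivial normal subgroup inside a malnormal `M` meets each conjugate `M^x`, so no `x`
lies outside `M`. -/
theorem Malnormal.eq_top_of_normal_le_s18 {G : Type*} [Group G] {M N : Subgroup G}
    (hM : Malnormal M) (hN : N.Normal) (hNbot : N ≠ ⊥) (hNM : N ≤ M) : M = ⊤ := by
  obtain ⟨⟨n, hnN⟩, hn1⟩ := Subgroup.ne_bot_iff_exists_ne_one.mp hNbot
  refine (Subgroup.eq_top_iff' M).mpr fun x => by_contra fun hx => hn1 ?_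
  have hconj : x⁻¹ * n * x ∈ N := by simpa using hN.conj_mem n hnN x⁻¹
  exact Subtype.ext (hM x hx n (hNM hnN) (hNM hconj))

theorem nilpClassLe_top_iff {G : Type*} [Group G] (k : ℕ) :
    NilpClassLe k (⊤ : Subgroup G) ↔ (⊤ : Subgroup G).lowerCentralSeries k = ⊥ := by
  rw [← Subgroup.top_subtype_lowerCentralSeries, Subgroup.map_eq_bot_iff_of_injective _
    (Subgroup.subtype_injective _)]
  rfl

theorem stmt18 {G : Type*} [Group G] (k : ℕ)
    (hCSN : ∀ H : Subgroup G, Maximal (NilpClassLe k) H → Malnormal H)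
    (hmax : ∀ H : Subgroup G, NilpClassLe k H →
      ∃ M : Subgroup G, H ≤ M ∧ Maximal (NilpClassLe k) M)
    (N : Subgroup G) (hN : N.Normal) (hNbot : N ≠ ⊥) (hNnilp : NilpClassLe k N) :
    (⊤ : Subgroup G).lowerCentralSeries k = ⊥ := by
  obtain ⟨M, hNM, hM⟩ := hmax N hNnilp
  have hMtop : M = ⊤ := (hCSN M hM).eq_top_of_normal_le_s18 hN hNbot hNM
  exact (nilpClassLe_top_iff k).mp (hMtop ▸ hM.prop)
end
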